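/- On the elliptic curve $V^2 + (s + 1/s - 2)UV = U(U-1)^2$ over $\mathbb{Q}(s)$, the point $Q = (1, 0)$ has exact order $4$, and $2A = Q$ where $A = (s, s-1)$. -/

import Mathlib

/-! For `a ≠ 0`, on `y² + axy = x(x - 1)²` the tangent at `(1, 0)` passes through `(0, 0)`,
which is `2`-torsion since the tangent there is vertical; so `(1, 0)` has order `4`.
When `a = (t - 1)² / t`, the tangent at `(t, t - 1)` has slope `(2t - 1) / t` and meets the curve
again at `(1, 0)`, so `(t, t - 1)` halves `(1, 0)`. -/

noncomputable section

/-- The elliptic curve `V² + (s + 1/s - 2)UV = U(U-1)²` over `ℚ(s)`. -/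
def W7 : WeierstrassCurve.Affine (RatFunc ℚ) :=
  { a₁ := RatFunc.X + 1 / RatFunc.X - 2, a₂ := -2, a₃ := 0, a₄ := 1, a₆ := 0 }

lemma RatFunc.X_sq_ne_one {K : Type*} [Field K] : (RatFunc.X : RatFunc K) ^ 2 ≠ 1 := by
  intro h
  have hdeg := congrArg RatFunc.intDegree h
  rw [sq, RatFunc.intDegree_mul RatFunc.X_ne_zero RatFunc.X_ne_zero, RatFunc.intDegree_X,
    RatFunc.intDegree_one] at hdeg
  norm_num at hdeg

namespace WeierstrassCurve.Affine.Point

variable {F : Type*} [Field F] [DecidableEq F]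

lemma some_add_self_eq {W : Affine F} {x y x' y' ℓ : F} {h : W.Nonsingular x y}
    {h' : W.Nonsingular x' y'} (hy : y ≠ W.negY x y) (hℓ : W.slope x x y y = ℓ)
    (hx' : W.addX x x ℓ = x') (hy' : W.addY x x y ℓ = y') :
    some x y h + some x y h = some x' y' h' := by
  subst hℓ
  rw [add_self_of_Y_ne hy, some.injEq]
  exact ⟨hx', hy'⟩

end WeierstrassCurve.Affine.Point

open WeierstrassCurve.Affine WeierstrassCurve.Affine.Point

variable {F : Type*} [Field F]

/-- The curve `y² + axy = x(x - 1)²`. -/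
def torsionFourCurve (a : F) : WeierstrassCurve.Affine F :=
  { a₁ := a, a₂ := -2, a₃ := 0, a₄ := 1, a₆ := 0 }

namespace torsionFourCurve

lemma nonsingular_zero_zero (a : F) : (torsionFourCurve a).Nonsingular 0 0 := by
  refine (nonsingular_iff' 0 0).mpr ⟨(equation_iff 0 0).mpr ?_, Or.inl ?_⟩ <;>
    norm_num [torsionFourCurve]

lemma nonsingular_one_zero {a : F} (ha : a ≠ 0) : (torsionFourCurve a).Nonsingular 1 0 := by
  refine (nonsingular_iff' 1 0).mpr ⟨(equation_iff 1 0).mpr ?_, Or.inr ?_⟩ <;>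
    norm_num [torsionFourCurve, ha]

variable {t : F}

lemma sub_one_ne_negY (ht : t ≠ 0) (ht2 : t ^ 2 ≠ 1) :
    t - 1 ≠ (torsionFourCurve (t + 1 / t - 2)).negY t (t - 1) := by
  rw [← sub_ne_zero]
  convert sub_ne_zero.mpr ht2 using 1
  simp only [negY, torsionFourCurve]
  field_simp
  ring

lemma nonsingular_self_sub_one (ht : t ≠ 0) (ht2 : t ^ 2 ≠ 1) :
    (torsionFourCurve (t + 1 / t - 2)).Nonsingular t (t - 1) := by
  refine (nonsingular_iff _ _).mpr ⟨(equation_iff _ _).mpr ?_, Or.inr (sub_one_ne_negY ht ht2)⟩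
  simp only [torsionFourCurve]
  field_simp
  ring

lemma add_one_div_sub_two_ne_zero (ht : t ≠ 0) (ht2 : t ^ 2 ≠ 1) : t + 1 / t - 2 ≠ 0 := by
  have ht1 : t - 1 ≠ 0 := sub_ne_zero.mpr (by rintro rfl; simp at ht2)
  rw [show t + 1 / t - 2 = (t - 1) ^ 2 / t by field_simp; ring]
  exact div_ne_zero (pow_ne_zero 2 ht1) ht

variable [DecidableEq F]

lemma some_zero_zero_add_self (a : F) :
    some 0 0 (nonsingular_zero_zero a) + some 0 0 (nonsingular_zero_zero a) = 0 :=
  add_self_of_Y_eq (by simp [torsionFourCurve])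

lemma some_one_zero_add_self {a : F} (ha : a ≠ 0) :
    some 1 0 (nonsingular_one_zero ha) + some 1 0 (nonsingular_one_zero ha) =
      some 0 0 (nonsingular_zero_zero a) := by
  have hy : (0 : F) ≠ (torsionFourCurve a).negY 1 0 := by simpa [torsionFourCurve] using ha
  refine some_add_self_eq hy (ℓ := 0) ?_ ?_ ?_
  · rw [slope_of_Y_ne rfl hy]
    norm_num [torsionFourCurve, ha]
  · norm_num [torsionFourCurve, ha]
  · norm_num [addY, torsionFourCurve]

lemma addOrderOf_some_one_zero {a : F} (ha : a ≠ 0) :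
    addOrderOf (some 1 0 (nonsingular_one_zero ha)) = 4 := by
  have h2 : 2 • some 1 0 (nonsingular_one_zero ha) = some 0 0 (nonsingular_zero_zero a) := by
    rw [two_nsmul, some_one_zero_add_self ha]
  have h4 : 2 ^ 2 • some 1 0 (nonsingular_one_zero ha) = 0 := by
    rw [pow_two, mul_nsmul, h2, two_nsmul, some_zero_zero_add_self]
  simpa using addOrderOf_eq_prime_pow (by rw [pow_one, h2]; exact some_ne_zero _) h4

lemma some_self_sub_one_add_self (ht : t ≠ 0) (ht2 : t ^ 2 ≠ 1) :
    some t (t - 1) (nonsingular_self_sub_one ht ht2) +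
        some t (t - 1) (nonsingular_self_sub_one ht ht2) =
      some 1 0 (nonsingular_one_zero (add_one_div_sub_two_ne_zero ht ht2)) := by
  have hy := sub_one_ne_negY ht ht2
  refine some_add_self_eq hy (ℓ := (2 * t - 1) / t) ?_ ?_ ?_
  · rw [slope_of_Y_ne rfl hy, div_eq_div_iff (sub_ne_zero.mpr hy) ht]
    simp only [negY, torsionFourCurve]
    field_simp
    ring
  · simp only [addX, torsionFourCurve]
    field_simp
    ring
  · simp only [addY, negAddY, addX, negY, torsionFourCurve]
    field_simp
    ring

end torsionFourCurve

open torsionFourCurve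

open Classical in
/-- `Q = (1,0)` has exact order 4 and `2A = Q` where `A = (s, s-1)`. -/
theorem stmt7 :
    ∃ hQ : W7.Nonsingular 1 0, ∃ hA : W7.Nonsingular RatFunc.X (RatFunc.X - 1),
      addOrderOf (WeierstrassCurve.Affine.Point.some _ _ hQ) = 4 ∧
      (2 : ℤ) • (WeierstrassCurve.Affine.Point.some _ _ hA) =
        WeierstrassCurve.Affine.Point.some _ _ hQ := by
  have hX : (RatFunc.X : RatFunc ℚ) ≠ 0 := RatFunc.X_ne_zero
  have hX2 : (RatFunc.X : RatFunc ℚ) ^ 2 ≠ 1 := RatFunc.X_sq_ne_one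
  have ha := add_one_div_sub_two_ne_zero hX hX2
  refine ⟨nonsingular_one_zero ha, nonsingular_self_sub_one hX hX2,
    addOrderOf_some_one_zero ha, ?_⟩
  rw [two_zsmul]
  exact some_self_sub_one_add_self hX hX2
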